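/- arXiv:1908.06587 — 3 statements merged into one kernel-verified Lean document; each statement's English description precedes it below -/
import Mathlib

section
/- For every nonzero real λ, every positive integer k, and every integer n ≥ 0, one has 2^{n+k} S_{2,λ/2}(n+k,k) = C(n+k,k) Σ_{l=0}^{n} b*^{(k)}_{l,λ}(k) S_{2,λ}(n,l), where b*^{(k)}_{l,λ} are the type 2 degenerate Bernoulli polynomials of the second kind of order k evaluated at x = k, and S_{2,λ} are the degenerate Stirling numbers of the second kind. -/
/-!
Substitute `t ↦ e_λ(t) - 1` into the generating function of `b*^{(k)}_{l,λ}(k)`. Since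
`log_λ(e_λ(t)) = t` and `(e_λ(t) - e_λ(t)⁻¹) e_λ(t) = e_λ(t)² - 1 = e_{λ/2}(2t) - 1`, one side
becomes `((e_{λ/2}(2t) - 1) / t)^k = k! Σ_m 2^{m+k} S_{2,λ/2}(m+k,k) t^m / (m+k)!`, the other
`Σ_l b*_l (e_λ(t) - 1)^l / l! = Σ_m (Σ_l b*_l S_{2,λ}(m,l)) t^m / m!`; compare coefficients of
`t^n`.

Exchanging the two sums is legitimate: writing `e_λ(t) - 1 = Σ_m c_m t^m`, the coefficients of its
`l`-th power are dominated by those of `(Σ_m |c_m| t^m)^l`, and `Σ_m |c_m| |t|^m → 0` as `t → 0`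
because `c_0 = 0`.
-/

open Real Topology Filter
open FormalMultilinearSeries PowerSeries
open scoped Nat

theorem eq_zero_of_eventually_hasSum_pow_zero {d : ℕ → ℝ}
    (hd : ∀ᶠ t in 𝓝[≠] (0 : ℝ), HasSum (fun n => d n * t ^ n) 0) : d = 0 := by
  obtain ⟨t₀, ht₀, hsum⟩ := (eventually_mem_nhdsWithin.and hd).exists
  have hrad : 0 < (ofScalars ℝ d).radius := by
    refine lt_of_lt_of_le ?_ ((ofScalars ℝ d).le_radius_of_summable (r := ‖t₀‖₊) ?_)
    · exact_mod_cast nnnorm_pos.mpr ht₀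
    · simpa [ofScalars_norm, norm_mul, norm_pow] using hsum.summable.norm
  have hp := ((ofScalars ℝ d).hasFPowerSeriesOnBall hrad).hasFPowerSeriesAt
  have hzero : ∀ᶠ t in 𝓝[≠] (0 : ℝ), (ofScalars ℝ d).sum t = 0 :=
    hd.mono fun t ht => by
      change ofScalarsSum d t = 0
      simpa [ofScalars_sum_eq] using ht.tsum_eq
  exact (ofScalars_series_eq_zero ℝ).mp <| hp.eq_zero_of_eventually <|
    hp.analyticAt.frequently_zero_iff_eventually_zero.mp hzero.frequently

theorem eq_of_eventually_hasSum_pow {a b : ℕ → ℝ} {f : ℝ → ℝ}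
    (ha : ∀ᶠ t in 𝓝[≠] (0 : ℝ), HasSum (fun n => a n * t ^ n) (f t))
    (hb : ∀ᶠ t in 𝓝[≠] (0 : ℝ), HasSum (fun n => b n * t ^ n) (f t)) : a = b :=
  sub_eq_zero.mp <| eq_zero_of_eventually_hasSum_pow_zero <| (ha.and hb).mono fun _ h => by
    simpa [sub_mul] using h.1.sub h.2

theorem tendsto_tsum_abs_mul_pow_nhds_zero {c : ℕ → ℝ} (hc0 : c 0 = 0) {t₁ : ℝ} (ht₁ : t₁ ≠ 0)
    (h : Summable fun m => c m * t₁ ^ m) :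
    Tendsto (fun t => ∑' m, |c m| * |t| ^ m) (𝓝 0) (𝓝 0) := by
  have hbound : Summable fun m => |c m| * |t₁| ^ m := h.abs.congr fun m => by rw [abs_mul, abs_pow]
  have hlim (m : ℕ) : Tendsto (fun t : ℝ => |c m| * |t| ^ m) (𝓝 0) (𝓝 (|c m| * |(0 : ℝ)| ^ m)) :=
    (continuous_const.mul (continuous_abs.pow m)).tendsto 0
  have hsum0 : ∑' m, |c m| * |(0 : ℝ)| ^ m = 0 := by
    rw [tsum_eq_single 0 fun m hm => by simp [hm]]
    simp [hc0]
  have hle : ∀ᶠ t in 𝓝 (0 : ℝ), ∀ m, ‖|c m| * |t| ^ m‖ ≤ |c m| * |t₁| ^ m := by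
    filter_upwards [(continuous_abs.tendsto' 0 0 abs_zero).eventually_le_const
      (abs_pos.mpr ht₁)] with t ht m
    rw [Real.norm_eq_abs, abs_of_nonneg (by positivity)]
    gcongr
  simpa only [hsum0] using tendsto_tsum_of_dominated_convergence hbound hlim hle

namespace PowerSeries

theorem coeff_pow_eq_zero_of_lt {R : Type*} [CommSemiring R] {p : R⟦X⟧}
    (hp : constantCoeff p = 0) {l n : ℕ} (h : n < l) : coeff n (p ^ l) = 0 :=
  coeff_of_lt_order n <| (Nat.cast_lt.mpr h).trans_le (le_order_pow_of_constantCoeff_eq_zero l hp)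

theorem hasSum_coeff_mul_mul_pow {p q : ℝ⟦X⟧} {t a b : ℝ}
    (hp : HasSum (fun n => coeff n p * t ^ n) a) (hq : HasSum (fun n => coeff n q * t ^ n) b) :
    HasSum (fun n => coeff n (p * q) * t ^ n) (a * b) := by
  have hp' := hp.summable.norm
  have hq' := hq.summable.norm
  have hcauchy := (summable_norm_sum_mul_antidiagonal_of_summable_norm hp' hq').of_norm.hasSum
  rw [← tsum_mul_tsum_eq_tsum_sum_antidiagonal_of_summable_norm hp' hq', hp.tsum_eq,
    hq.tsum_eq] at hcauchy
  refine hcauchy.congr_fun fun n => ?_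
  rw [coeff_mul, Finset.sum_mul]
  refine Finset.sum_congr rfl fun ij hij => ?_
  rw [← Finset.HasAntidiagonal.mem_antidiagonal.mp hij, pow_add]
  ring

theorem hasSum_coeff_pow_mul_pow {p : ℝ⟦X⟧} {t a : ℝ}
    (hp : HasSum (fun n => coeff n p * t ^ n) a) (l : ℕ) :
    HasSum (fun n => coeff n (p ^ l) * t ^ n) (a ^ l) := by
  induction l with
  | zero =>
    refine (pow_zero a ▸ hasSum_ite_eq 0 (1 : ℝ)).congr_fun fun n => ?_
    by_cases hn : n = 0 <;> simp [coeff_one, hn]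
  | succ l ih => simpa only [pow_succ] using hasSum_coeff_mul_mul_pow ih hp

theorem abs_coeff_mk_pow_le (c : ℕ → ℝ) (l n : ℕ) :
    |coeff n (mk c ^ l)| ≤ coeff n (mk (fun m => |c m|) ^ l) := by
  induction l generalizing n with
  | zero => by_cases hn : n = 0 <;> simp [coeff_one, hn]
  | succ l ih =>
    simp only [pow_succ, coeff_mul, coeff_mk]
    refine (Finset.abs_sum_le_sum_abs _ _).trans (Finset.sum_le_sum fun ij _ => ?_)
    rw [abs_mul]
    exact mul_le_mul_of_nonneg_right (ih ij.1) (abs_nonneg _)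

theorem hasSum_sum_mul_coeff_mk_pow_mul_pow {b c : ℕ → ℝ} {r t g B : ℝ} (hc0 : c 0 = 0)
    (hb : Summable fun l => |b l| * r ^ l) (hB : HasSum (fun l => b l * g ^ l) B)
    (hc : HasSum (fun m => c m * t ^ m) g) (hcr : ∑' m, |c m| * |t| ^ m ≤ r) :
    HasSum (fun m => (∑ l ∈ Finset.range (m + 1), b l * coeff m (mk c ^ l)) * t ^ m) B := by
  set G := ∑' m, |c m| * |t| ^ m
  have hG : HasSum (fun m => coeff m (mk fun m => |c m|) * |t| ^ m) G := by
    simpa only [coeff_mk] using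
      (hc.summable.abs.congr fun m => by rw [abs_mul, abs_pow]).hasSum
  have hG0 : 0 ≤ G := tsum_nonneg fun m => by positivity
  have hrows (l : ℕ) : HasSum (fun m => coeff m (mk c ^ l) * t ^ m) (g ^ l) :=
    hasSum_coeff_pow_mul_pow (by simpa only [coeff_mk] using hc) l
  -- the majorant's rows sum to `|b l| * G ^ l ≤ |b l| * r ^ l`
  have hU : Summable fun p : ℕ × ℕ =>
      |b p.1| * (coeff p.2 (mk (fun m => |c m|) ^ p.1) * |t| ^ p.2) := by
    have hU0 : 0 ≤ fun p : ℕ × ℕ =>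
        |b p.1| * (coeff p.2 (mk (fun m => |c m|) ^ p.1) * |t| ^ p.2) :=
      fun p => mul_nonneg (abs_nonneg _) <|
        mul_nonneg ((abs_nonneg _).trans (abs_coeff_mk_pow_le c _ _)) (by positivity)
    have hUrows (l : ℕ) := (hasSum_coeff_pow_mul_pow hG l).mul_left |b l|
    refine (summable_prod_of_nonneg hU0).mpr ⟨fun l => (hUrows l).summable, ?_⟩
    refine hb.of_nonneg_of_le (fun l => tsum_nonneg fun m => hU0 (l, m)) fun l => ?_
    rw [(hUrows l).tsum_eq]
    exact mul_le_mul_of_nonneg_left (pow_le_pow_left₀ hG0 hcr l) (abs_nonneg _)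
  have hu : Summable fun p : ℕ × ℕ => b p.1 * (coeff p.2 (mk c ^ p.1) * t ^ p.2) := by
    refine hU.of_norm_bounded fun p => ?_
    rw [Real.norm_eq_abs, abs_mul, abs_mul, abs_pow]
    gcongr
    exact abs_coeff_mk_pow_le c _ _
  have hsum : HasSum (fun p : ℕ × ℕ => b p.1 * (coeff p.2 (mk c ^ p.1) * t ^ p.2)) B := by
    rw [hB.unique (hu.hasSum.prod_fiberwise fun l => (hrows l).mul_left (b l))]
    exact hu.hasSum
  refine ((Equiv.prodComm ℕ ℕ).hasSum_iff.mpr hsum).prod_fiberwise fun m => ?_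
  rw [Finset.sum_mul]
  refine (hasSum_sum_of_ne_finset_zero fun l hl => ?_).congr_fun fun l => ?_
  · rw [coeff_pow_eq_zero_of_lt (by simpa using hc0) (by simpa using hl), mul_zero, zero_mul]
  · change b l * (coeff m (mk c ^ l) * t ^ m) = _
    ring

theorem eventually_hasSum_sum_mul_coeff_mk_pow_mul_pow {b c : ℕ → ℝ} {F g : ℝ → ℝ}
    (hc0 : c 0 = 0) (hF : ∀ᶠ s in 𝓝[≠] (0 : ℝ), HasSum (fun l => b l * s ^ l) (F s))
    (hg : ∀ᶠ t in 𝓝 (0 : ℝ), HasSum (fun m => c m * t ^ m) (g t))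
    (hg0 : Tendsto g (𝓝[≠] 0) (𝓝[≠] 0)) :
    ∀ᶠ t in 𝓝[≠] (0 : ℝ), HasSum
      (fun m => (∑ l ∈ Finset.range (m + 1), b l * coeff m (mk c ^ l)) * t ^ m) (F (g t)) := by
  have hg' : ∀ᶠ t in 𝓝[≠] (0 : ℝ), HasSum (fun m => c m * t ^ m) (g t) := nhdsWithin_le_nhds hg
  obtain ⟨s₀, hs₀, hFs₀⟩ := (eventually_mem_nhdsWithin.and hF).exists
  obtain ⟨t₁, ht₁, hgt₁⟩ := (eventually_mem_nhdsWithin.and hg').exists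
  have hb : Summable fun l => |b l| * |s₀| ^ l :=
    hFs₀.summable.abs.congr fun l => by rw [abs_mul, abs_pow]
  have hsmall := (tendsto_tsum_abs_mul_pow_nhds_zero hc0 ht₁ hgt₁.summable).eventually_lt_const
    (abs_pos.mpr hs₀)
  filter_upwards [hg0.eventually hF, nhdsWithin_le_nhds (s := {0}ᶜ) (hg.and hsmall)] with t hFt hgt
  exact hasSum_sum_mul_coeff_mk_pow_mul_pow hc0 hb hFt hgt.1 hgt.2.le

theorem div_factorial_eq_coeff_mk_pow_div_factorial {S : ℕ → ℕ → ℝ} {G : ℝ → ℝ}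
    (hS : ∀ l, ∀ᶠ t in 𝓝 (0 : ℝ), HasSum (fun n => S n l * t ^ n / n !) (G t ^ l / l !))
    (l m : ℕ) : S m l / m ! = coeff m (mk (fun n => S n 1 / n !) ^ l) / l ! := by
  have hG : ∀ᶠ t in 𝓝 (0 : ℝ), HasSum (fun n => coeff n (mk fun n => S n 1 / n !) * t ^ n) (G t) :=
    (hS 1).mono fun t ht => by simpa [div_mul_eq_mul_div] using ht
  refine congrFun (eq_of_eventually_hasSum_pow (a := fun m => S m l / m !)
    (b := fun m => coeff m (mk (fun n => S n 1 / n !) ^ l) / l !)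
    (f := fun t => G t ^ l / l !) ?_ ?_) m
  · exact nhdsWithin_le_nhds <| (hS l).mono fun t ht => by simpa [div_mul_eq_mul_div] using ht
  · exact nhdsWithin_le_nhds <| hG.mono fun t ht => by
      simpa [div_mul_eq_mul_div] using (hasSum_coeff_pow_mul_pow ht l).div_const (l ! : ℝ)

end PowerSeries

theorem HasSum.nat_add_mul_pow {a : ℕ → ℝ} {k : ℕ} {t F : ℝ} (h : HasSum (fun n => a n * t ^ n) F)
    (ha : ∀ n < k, a n = 0) (ht : t ≠ 0) :
    HasSum (fun m => a (m + k) * t ^ m) (F / t ^ k) := by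
  have hshift : HasSum (fun m => a (m + k) * t ^ (m + k)) F := by
    refine (hasSum_nat_add_iff (f := fun n => a n * t ^ n) k).mpr ?_
    rwa [Finset.sum_eq_zero fun n hn => by rw [ha n (Finset.mem_range.mp hn), zero_mul], add_zero]
  refine (hshift.div_const (t ^ k)).congr_fun fun m => ?_
  field_simp
  ring

theorem eventually_hasSum_nat_add_of_egf_pow {S : ℕ → ℝ} {E : ℝ → ℝ} {k : ℕ} (q : ℝ)
    (hS0 : ∀ n < k, S n = 0)
    (hS : ∀ᶠ t in 𝓝 (0 : ℝ), HasSum (fun n => S n * t ^ n / n !) (E t ^ k / k !)) :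
    ∀ᶠ t in 𝓝[≠] (0 : ℝ), HasSum
      (fun m => k ! * (q ^ (m + k) * S (m + k) / (m + k)!) * t ^ m) ((E (q * t) / t) ^ k) := by
  have hq : Tendsto (fun t : ℝ => q * t) (𝓝 0) (𝓝 0) := by
    simpa using (continuous_const_mul q).tendsto 0
  filter_upwards [self_mem_nhdsWithin, nhdsWithin_le_nhds (hq.eventually hS)] with t ht hqt
  have hshift := HasSum.nat_add_mul_pow (a := fun n => q ^ n * S n / n !) (k := k)
    (hqt.congr_fun fun n => by ring) (fun n hn => by simp [hS0 n hn]) ht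
  rw [show (E (q * t) / t) ^ k = k ! * (E (q * t) ^ k / k ! / t ^ k) by rw [div_pow]; field_simp]
  exact (hshift.mul_left (k ! : ℝ)).congr_fun fun m => by ring

theorem eventually_pos_one_add_mul (lam : ℝ) : ∀ᶠ t in 𝓝 (0 : ℝ), 0 < 1 + lam * t :=
  ((continuous_const.add (continuous_const_mul lam)).tendsto' 0 1 (by simp)).eventually_const_lt
    one_pos

theorem tendsto_rpow_one_div_sub_one {lam : ℝ} (hlam : lam ≠ 0) :
    Tendsto (fun t : ℝ => (1 + lam * t) ^ (1 / lam) - 1) (𝓝[≠] 0) (𝓝[≠] 0) := by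
  have hcont : ContinuousAt (fun t : ℝ => (1 + lam * t) ^ (1 / lam) - 1) 0 :=
    ((continuousAt_const.add (continuousAt_const.mul continuousAt_id)).rpow_const
      (Or.inl (by simp))).sub continuousAt_const
  refine tendsto_nhdsWithin_iff.mpr ⟨?_, ?_⟩
  · simpa using hcont.tendsto.mono_left nhdsWithin_le_nhds
  · filter_upwards [self_mem_nhdsWithin, nhdsWithin_le_nhds (eventually_pos_one_add_mul lam)]
      with t ht htpos
    intro h
    have h1 : (1 + lam * t) ^ (1 / lam) = (1 : ℝ) ^ (1 / lam) := by simpa [sub_eq_zero] using h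
    rw [Real.rpow_left_inj htpos.le zero_le_one (by simpa using hlam)] at h1
    exact ht (by simpa [hlam] using h1)

theorem type2_bernoulli_egf_at_degenerate_exp_sub_one {lam t s : ℝ} (hlam : lam ≠ 0)
    (ht : 0 < 1 + lam * t) (hs : 1 + s = (1 + lam * t) ^ (1 / lam)) (k : ℕ) :
    (((1 + s) - (1 + s)⁻¹) / (((1 + s) ^ lam - 1) / lam)) ^ k * (1 + s) ^ (k : ℝ) =
      (((1 + lam / 2 * (2 * t)) ^ (1 / (lam / 2)) - 1) / t) ^ k := by
  have hu : 0 < 1 + s := hs ▸ Real.rpow_pos_of_pos ht _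
  have hlog : ((1 + s) ^ lam - 1) / lam = t := by
    rw [hs, ← Real.rpow_mul ht.le, one_div_mul_cancel hlam, Real.rpow_one]
    field_simp
    ring
  have hsq : (1 + s) * (1 + s) = (1 + lam / 2 * (2 * t)) ^ (1 / (lam / 2)) := by
    rw [hs, ← Real.rpow_add ht, one_div_div]
    congr 1 <;> ring
  rw [hlog, Real.rpow_natCast, ← mul_pow, div_mul_eq_mul_div, sub_mul, inv_mul_cancel₀ hu.ne', hsq]

theorem eq_choose_mul_of_factorial_mul_div_eq {n k : ℕ} {A B : ℝ}
    (h : k ! * (A / (n + k)!) = B / n !) : A = (n + k).choose k * B := by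
  rw [← Nat.add_choose_mul_factorial_mul_factorial n k] at h
  push_cast at h
  field_simp at h
  rw [div_eq_iff (by exact_mod_cast (Nat.choose_pos (Nat.le_add_left k n)).ne')] at h
  linear_combination h

theorem degenerate_stirling_second_kind_type2_bernoulli_identity_general
    (lam : ℝ) (hlam : lam ≠ 0)
    (bstar : ℕ → ℕ → ℝ → ℝ)
    (hbstar : ∀ (k : ℕ) (x : ℝ), ∀ᶠ t : ℝ in 𝓝[≠] 0, HasSum
      (fun n : ℕ => bstar k n x * t ^ n / (n.factorial : ℝ))
      ((((1 + t) - (1 + t)⁻¹) / (((1 + t) ^ lam - 1) / lam)) ^ k * (1 + t) ^ x))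
    (S2d : ℝ → ℕ → ℕ → ℝ)
    (hS2dzero : ∀ (μ : ℝ) (n k : ℕ), n < k → S2d μ n k = 0)
    (hS2d : ∀ μ : ℝ, μ ≠ 0 → ∀ k : ℕ, ∀ᶠ t : ℝ in 𝓝 0, HasSum
      (fun n : ℕ => S2d μ n k * t ^ n / (n.factorial : ℝ))
      (((1 + μ * t) ^ (1 / μ) - 1) ^ k / (k.factorial : ℝ)))
    (k : ℕ) (n : ℕ) :
    (2 : ℝ) ^ (n + k) * S2d (lam / 2) (n + k) k =
      ((n + k).choose k : ℝ) * ∑ l ∈ Finset.range (n + 1), bstar k l (k : ℝ) * S2d lam n l := by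
  set c : ℕ → ℝ := fun m => S2d lam m 1 / (m ! : ℝ)
  have hc : ∀ᶠ t in 𝓝 (0 : ℝ), HasSum (fun m => c m * t ^ m) ((1 + lam * t) ^ (1 / lam) - 1) :=
    (hS2d lam hlam 1).mono fun t ht => by simpa [c, div_mul_eq_mul_div] using ht
  have hc0 : c 0 = 0 := by simp [c, hS2dzero lam 0 1 one_pos]
  have hRHS := eventually_hasSum_sum_mul_coeff_mk_pow_mul_pow (b := fun l => bstar k l k / l !) hc0
    ((hbstar k k).mono fun s hs => hs.congr_fun fun l => by ring) hc
    (tendsto_rpow_one_div_sub_one hlam)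
  have hLHS := eventually_hasSum_nat_add_of_egf_pow 2 (hS2dzero (lam / 2) · k)
    (hS2d (lam / 2) (div_ne_zero hlam two_ne_zero) k)
  have hcoeff := congrFun (eq_of_eventually_hasSum_pow hLHS <| by
    filter_upwards [hRHS, nhdsWithin_le_nhds (eventually_pos_one_add_mul lam)] with t ht hpos
    rwa [type2_bernoulli_egf_at_degenerate_exp_sub_one hlam hpos (add_sub_cancel _ _)] at ht) n
  refine eq_choose_mul_of_factorial_mul_div_eq (hcoeff.trans ?_)
  rw [Finset.sum_div]
  refine Finset.sum_congr rfl fun l _ => ?_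
  rw [mul_div_assoc, div_factorial_eq_coeff_mk_pow_div_factorial (hS2d lam hlam) l n]
  ring

/-- For nonzero real `lam`, positive integer `k` and `n ≥ 0`:
`2^{n+k} S_{2,λ/2}(n+k,k) = C(n+k,k) Σ_{l=0}^n b*^{(k)}_{l,λ}(k) S_{2,λ}(n,l)`,
where `b*^{(k)}` has EGF `(((1+t)-(1+t)⁻¹)/log_λ(1+t))^k (1+t)^x` with
`log_λ(1+t) = ((1+t)^λ-1)/λ`, and the degenerate Stirling numbers of the second kind
`S_{2,μ}(n,k)` have EGF `(e_μ(t)-1)^k/k!` with `e_μ(t) = (1+μt)^{1/μ}` (and vanish for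
`n < k`). -/
theorem degenerate_stirling_second_kind_type2_bernoulli_identity
    (lam : ℝ) (hlam : lam ≠ 0)
    (bstar : ℕ → ℕ → ℝ → ℝ)
    (hbstar : ∀ (k : ℕ) (x : ℝ), ∀ᶠ t : ℝ in 𝓝[≠] 0, HasSum
      (fun n : ℕ => bstar k n x * t ^ n / (n.factorial : ℝ))
      ((((1 + t) - (1 + t)⁻¹) / (((1 + t) ^ lam - 1) / lam)) ^ k * (1 + t) ^ x))
    (S2d : ℝ → ℕ → ℕ → ℝ)
    (hS2dzero : ∀ (μ : ℝ) (n k : ℕ), n < k → S2d μ n k = 0)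
    (hS2d : ∀ μ : ℝ, μ ≠ 0 → ∀ k : ℕ, ∀ᶠ t : ℝ in 𝓝 0, HasSum
      (fun n : ℕ => S2d μ n k * t ^ n / (n.factorial : ℝ))
      (((1 + μ * t) ^ (1 / μ) - 1) ^ k / (k.factorial : ℝ)))
    (k : ℕ) (hk : 0 < k) (n : ℕ) :
    (2 : ℝ) ^ (n + k) * S2d (lam / 2) (n + k) k =
      ((n + k).choose k : ℝ) * ∑ l ∈ Finset.range (n + 1), bstar k l (k : ℝ) * S2d lam n l :=
  degenerate_stirling_second_kind_type2_bernoulli_identity_general lam hlam bstar hbstar S2d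
    hS2dzero hS2d k n
end

section
/- For every nonzero real λ, every real x, every positive integer k, and every integer n ≥ 0, one has b*^{(k)}_{n,λ}(x) = Σ_{l=0}^{n} β*^{(−k)}_{l,λ}(x) S_{1,λ}(n,l), where b*^{(k)}_{n,λ} are the type 2 degenerate Bernoulli polynomials of the second kind of order k, β*^{(−k)}_{l,λ} are the type 2 degenerate Bernoulli polynomials of order −k, and S_{1,λ} are the degenerate Stirling numbers of the first kind. -/
open Real Topology Filter

/-!
Substituting `u = log_λ(1+t)` turns the generating function of `β*^{(-k)}_{l,λ}(x)` into that of
`b*^{(k)}_{n,λ}(x)`, because `e_λ^y(log_λ(1+t)) = (1+t)^y`. Expanding each `u^l/l!` by the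
generating function of `S_{1,λ}(·,l)` and comparing coefficients of `t^n` gives the identity.
Only the terms with `l ≤ n` have to be expanded, so no double series is rearranged: since
`log_λ(1+t) = O(t)`, the tail `Σ_{l>n}` is `O(t^{n+1})`, and a power series that is `O(t^{n+1})`
on a punctured neighbourhood of `0` has no coefficients below `t^{n+1}`.
-/

open Asymptotics Finset FormalMultilinearSeries

open scoped Nat

section PowerSeries

variable {𝕜 : Type*} [NontriviallyNormedField 𝕜]

theorem isBigO_sub_sum_range_pow_of_hasSum [CompleteSpace 𝕜] {c : ℕ → 𝕜} {G : 𝕜 → 𝕜}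
    (hG : ∀ᶠ u in 𝓝[≠] 0, HasSum (fun l => c l * u ^ l) (G u)) (N : ℕ) :
    (fun u => G u - ∑ l ∈ range N, c l * u ^ l) =O[𝓝[≠] 0] fun u => u ^ N := by
  set p := ofScalars 𝕜 c
  have hp : ∀ l (u : 𝕜), p l (fun _ => u) = c l * u ^ l := fun l u => by simp [p, mul_comm]
  obtain ⟨u₀, hu₀, hu₀ne⟩ := (hG.and self_mem_nhdsWithin).exists
  have hradius : 0 < p.radius := by
    refine lt_of_lt_of_le (by simpa using hu₀ne) (p.le_radius_of_tendsto (r := ‖u₀‖₊) (l := 0) ?_)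
    simpa [p, Function.comp_def] using tendsto_norm_zero.comp hu₀.summable.tendsto_atTop_zero
  have hG_eq : ∀ᶠ u in 𝓝[≠] (0 : 𝕜), G u = p.sum u := by
    filter_upwards [hG, nhdsWithin_le_nhds (Metric.eball_mem_nhds (0 : 𝕜) hradius)] with u hu hmem
    exact hu.unique (by simpa only [hp] using p.hasSum hmem)
  have hO := ((p.hasFPowerSeriesOnBall hradius).hasFPowerSeriesAt.isBigO_sub_partialSum_pow N).mono
    (nhdsWithin_le_nhds (s := {0}ᶜ))
  refine isBigO_norm_right.mp (hO.congr' ?_ (Eventually.of_forall fun u => by simp))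
  filter_upwards [hG_eq] with u hu
  simp [hu, partialSum, hp]

theorem eq_zero_of_isBigO_mul_pow_succ {c : 𝕜} {m : ℕ}
    (h : (fun t : 𝕜 => c * t ^ m) =O[𝓝[≠] 0] fun t => t ^ (m + 1)) : c = 0 := by
  by_contra hc
  have hnz : ∀ᶠ t : 𝕜 in 𝓝[≠] 0, t ^ m ≠ 0 := by
    filter_upwards [self_mem_nhdsWithin] with t ht using pow_ne_zero m ht
  exact isLittleO_irrefl hnz.frequently <| ((isBigO_const_mul_left_iff hc).mp h).trans_isLittleO
    ((isLittleO_pow_pow m.lt_succ_self).mono nhdsWithin_le_nhds)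

theorem coeff_eq_zero_of_hasSum_isBigO_pow [CompleteSpace 𝕜] {b : ℕ → 𝕜} {g : 𝕜 → 𝕜} {N : ℕ}
    (hg : ∀ᶠ t in 𝓝[≠] 0, HasSum (fun m => b m * t ^ m) (g t))
    (hO : g =O[𝓝[≠] 0] fun t => t ^ N) {m : ℕ} (hm : m < N) : b m = 0 := by
  induction m using Nat.strong_induction_on with
  | _ m ih =>
  have hsum : ∀ t, ∑ l ∈ range (m + 1), b l * t ^ l = b m * t ^ m := fun t => by
    rw [sum_range_succ, sum_eq_zero fun l hl => by
      rw [ih l (mem_range.mp hl) ((mem_range.mp hl).trans hm), zero_mul], zero_add]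
  have hg_small : g =O[𝓝[≠] 0] fun t => t ^ (m + 1) := by
    refine hO.trans ?_
    rcases (Nat.succ_le_of_lt hm).lt_or_eq with hlt | heq
    · exact ((isLittleO_pow_pow hlt).mono nhdsWithin_le_nhds).isBigO
    · rw [← heq]
      exact isBigO_refl _ _
  refine eq_zero_of_isBigO_mul_pow_succ (m := m) ?_
  simpa [hsum] using hg_small.sub (isBigO_sub_sum_range_pow_of_hasSum hg (m + 1))

theorem coeff_comp_eq_sum_range [CompleteSpace 𝕜] {a c : ℕ → 𝕜} {s : ℕ → ℕ → 𝕜} {G U : 𝕜 → 𝕜}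
    {N : ℕ} (hG : ∀ᶠ u in 𝓝[≠] 0, HasSum (fun l => c l * u ^ l) (G u))
    (hU : Tendsto U (𝓝[≠] 0) (𝓝[≠] 0)) (hUO : U =O[𝓝[≠] 0] fun t => t)
    (hs : ∀ l < N, ∀ᶠ t in 𝓝[≠] 0, HasSum (fun m => s m l * t ^ m) (U t ^ l))
    (ha : ∀ᶠ t in 𝓝[≠] 0, HasSum (fun m => a m * t ^ m) (G (U t))) {m : ℕ} (hm : m < N) :
    a m = ∑ l ∈ range N, c l * s m l := by
  have htail : (fun t => G (U t) - ∑ l ∈ range N, c l * U t ^ l) =O[𝓝[≠] 0] fun t => t ^ N :=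
    ((isBigO_sub_sum_range_pow_of_hasSum hG N).comp_tendsto hU).trans (hUO.pow N)
  have hs' : ∀ᶠ t in 𝓝[≠] 0, ∀ l ∈ range N, HasSum (fun m => s m l * t ^ m) (U t ^ l) :=
    (eventually_all_finset _).mpr fun l hl => hs l (mem_range.mp hl)
  have hdiff : ∀ᶠ t in 𝓝[≠] 0, HasSum (fun m => (a m - ∑ l ∈ range N, c l * s m l) * t ^ m)
      (G (U t) - ∑ l ∈ range N, c l * U t ^ l) := by
    filter_upwards [ha, hs'] with t hat hst
    have := hat.sub (hasSum_sum fun l hl => (hst l hl).mul_left (c l))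
    simpa [sub_mul, sum_mul, mul_assoc] using this
  exact sub_eq_zero.mp (coeff_eq_zero_of_hasSum_isBigO_pow hdiff htail hm)

end PowerSeries

/-- `degLog lam t` is the degenerate logarithm `log_λ(1 + t)`. -/
noncomputable def degLog (lam t : ℝ) : ℝ := ((1 + t) ^ lam - 1) / lam

theorem hasDerivAt_degLog {lam : ℝ} (hlam : lam ≠ 0) : HasDerivAt (degLog lam) 1 0 := by
  have h := (((hasDerivAt_id (0 : ℝ)).const_add 1).rpow_const (p := lam) (by norm_num)).sub_const 1
    |>.div_const lam
  unfold degLog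
  simpa [hlam] using h

theorem one_add_mul_degLog_rpow_div {lam t : ℝ} (hlam : lam ≠ 0) (ht : 0 < 1 + t) (y : ℝ) :
    (1 + lam * degLog lam t) ^ (y / lam) = (1 + t) ^ y := by
  rw [degLog, mul_div_cancel₀ _ hlam, add_sub_cancel, ← rpow_mul ht.le, mul_div_cancel₀ _ hlam]

theorem type2_bernoulli_egf_comp_degLog {lam t : ℝ} (hlam : lam ≠ 0) (ht : 0 < 1 + t) (k : ℕ)
    (x : ℝ) :
    (((1 + lam * degLog lam t) ^ (1 / lam) - (1 + lam * degLog lam t) ^ (-(1 / lam))) /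
        degLog lam t) ^ k * (1 + lam * degLog lam t) ^ (x / lam) =
      ((1 + t - (1 + t)⁻¹) / degLog lam t) ^ k * (1 + t) ^ x := by
  rw [← neg_div, one_add_mul_degLog_rpow_div hlam ht, one_add_mul_degLog_rpow_div hlam ht,
    one_add_mul_degLog_rpow_div hlam ht, rpow_one, rpow_neg_one]

theorem type2_degenerate_bernoulli_second_kind_in_terms_of_type2_general
    (lam : ℝ) (hlam : lam ≠ 0)
    (bstar : ℕ → ℕ → ℝ → ℝ)
    (hbstar : ∀ (k : ℕ) (x : ℝ), ∀ᶠ t : ℝ in 𝓝[≠] 0, HasSum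
      (fun n : ℕ => bstar k n x * t ^ n / (n.factorial : ℝ))
      ((((1 + t) - (1 + t)⁻¹) / (((1 + t) ^ lam - 1) / lam)) ^ k * (1 + t) ^ x))
    (k : ℕ)
    (beta : ℕ → ℝ → ℝ)
    (hbeta : ∀ x : ℝ, ∀ᶠ t : ℝ in 𝓝[≠] 0, HasSum
      (fun n : ℕ => beta n x * t ^ n / (n.factorial : ℝ))
      ((((1 + lam * t) ^ (1 / lam) - (1 + lam * t) ^ (-(1 / lam))) / t) ^ k *
        (1 + lam * t) ^ (x / lam)))
    (S1d : ℕ → ℕ → ℝ)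
    (hS1d : ∀ l : ℕ, ∀ᶠ t : ℝ in 𝓝 0, HasSum
      (fun n : ℕ => S1d n l * t ^ n / (n.factorial : ℝ))
      ((((1 + t) ^ lam - 1) / lam) ^ l / (l.factorial : ℝ)))
    (x : ℝ) (n : ℕ) :
    bstar k n x = ∑ l ∈ Finset.range (n + 1), beta l x * S1d n l := by
  have hU := hasDerivAt_degLog hlam
  have hU0 : degLog lam 0 = 0 := by simp [degLog]
  have hpos : ∀ᶠ t : ℝ in 𝓝[≠] 0, 0 < 1 + t := by
    filter_upwards [nhdsWithin_le_nhds (eventually_gt_nhds (by norm_num : (-1 : ℝ) < 0))] with t ht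
    linarith
  have key := coeff_comp_eq_sum_range (N := n + 1) (m := n)
    (a := fun m => bstar k m x / m !) (c := fun l => beta l x / l !)
    (s := fun m l => l ! * (S1d m l / m !)) (U := degLog lam)
    (G := fun u => (((1 + lam * u) ^ (1 / lam) - (1 + lam * u) ^ (-(1 / lam))) / u) ^ k *
      (1 + lam * u) ^ (x / lam))
    (by simpa only [mul_div_right_comm] using hbeta x)
    (by simpa [hU0] using hU.tendsto_nhdsNE one_ne_zero)
    (by simpa only [hU0, sub_zero] using hU.isBigO_sub.mono nhdsWithin_le_nhds)
    (fun l _ => by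
      filter_upwards [nhdsWithin_le_nhds (hS1d l)] with t ht
      have h := ht.mul_left (l ! : ℝ)
      rw [mul_div_cancel₀ _ (by positivity)] at h
      exact h.congr_fun fun m => by ring)
    (by
      filter_upwards [hbstar k x, hpos] with t ht h1t
      rw [type2_bernoulli_egf_comp_degLog hlam h1t]
      simpa only [mul_div_right_comm, degLog] using ht)
    n.lt_succ_self
  rw [div_eq_iff (by positivity), sum_mul] at key
  rw [key]
  refine sum_congr rfl fun l _ => ?_
  field_simp

/-- For nonzero real `lam`, real `x`, positive integer `k` and `n ≥ 0`:
`b*^{(k)}_{n,λ}(x) = Σ_{l=0}^n β*^{(-k)}_{l,λ}(x) S_{1,λ}(n,l)`, where `b*^{(k)}` has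
EGF `(((1+t)-(1+t)⁻¹)/log_λ(1+t))^k (1+t)^x` with `log_λ(1+t) = ((1+t)^λ-1)/λ`, the
type 2 degenerate Bernoulli polynomials of order `-k` have EGF
`((e_λ(t)-e_λ^{-1}(t))/t)^k e_λ^x(t)` with `e_λ^x(t) = (1+λt)^{x/λ}`, and the
degenerate Stirling numbers of the first kind `S_{1,λ}(n,l)` have EGF
`(log_λ(1+t))^l / l!` (and vanish for `n < l`). -/
theorem type2_degenerate_bernoulli_second_kind_in_terms_of_type2
    (lam : ℝ) (hlam : lam ≠ 0)
    (bstar : ℕ → ℕ → ℝ → ℝ)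
    (hbstar : ∀ (k : ℕ) (x : ℝ), ∀ᶠ t : ℝ in 𝓝[≠] 0, HasSum
      (fun n : ℕ => bstar k n x * t ^ n / (n.factorial : ℝ))
      ((((1 + t) - (1 + t)⁻¹) / (((1 + t) ^ lam - 1) / lam)) ^ k * (1 + t) ^ x))
    (k : ℕ) (hk : 0 < k)
    (beta : ℕ → ℝ → ℝ)
    (hbeta : ∀ x : ℝ, ∀ᶠ t : ℝ in 𝓝[≠] 0, HasSum
      (fun n : ℕ => beta n x * t ^ n / (n.factorial : ℝ))
      ((((1 + lam * t) ^ (1 / lam) - (1 + lam * t) ^ (-(1 / lam))) / t) ^ k *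
        (1 + lam * t) ^ (x / lam)))
    (S1d : ℕ → ℕ → ℝ)
    (hS1dzero : ∀ n l : ℕ, n < l → S1d n l = 0)
    (hS1d : ∀ l : ℕ, ∀ᶠ t : ℝ in 𝓝 0, HasSum
      (fun n : ℕ => S1d n l * t ^ n / (n.factorial : ℝ))
      ((((1 + t) ^ lam - 1) / lam) ^ l / (l.factorial : ℝ)))
    (x : ℝ) (n : ℕ) :
    bstar k n x = ∑ l ∈ Finset.range (n + 1), beta l x * S1d n l :=
  type2_degenerate_bernoulli_second_kind_in_terms_of_type2_general lam hlam bstar hbstar k beta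
    hbeta S1d hS1d x n
end

section
/- For every nonzero real λ, every real x, and every integer n ≥ 0, the type 2 degenerate Bernoulli polynomials of the second kind satisfy b*_{n,λ}(x) = Σ_{l=0}^{n} C(n,l) b*_{l,λ} (x)_{n−l}, where b*_{l,λ} = b*_{l,λ}(0) are the type 2 degenerate Bernoulli numbers of the second kind and (x)_m = x(x−1)···(x−m+1) with (x)_0 = 1 is the falling factorial. -/
/-!
The two generating functions (at `x` and at `0`) converge on a punctured neighbourhood of `0`,
so their coefficient sequences are Taylor series of analytic functions `Sₓ` and `S₀` that agree
with them off `0`. There `Sₓ(t) = S₀(t) (1 + t)^x`; both sides are continuous, so the identity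
also holds at `t = 0`, where the closed form itself is only a junk value. Taking the `n`-th
derivative at `0` with the Leibniz rule, and using that the binomial series gives
`(x)ₘ` as the `m`-th derivative of `(1 + t)^x` at `0`, yields the formula.
-/

open Real Topology Filter FormalMultilinearSeries
open scoped Nat

section

variable {𝕜 : Type*} [NontriviallyNormedField 𝕜]

theorem FormalMultilinearSeries.le_ofScalars_radius_of_summable {a : ℕ → 𝕜} {t : 𝕜}
    (h : Summable fun n => a n * t ^ n) : (‖t‖₊ : ENNReal) ≤ (ofScalars 𝕜 a).radius :=
  le_radius_of_tendsto _ (l := 0) <| by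
    simpa [ofScalars_norm, norm_mul, norm_pow] using h.tendsto_atTop_zero.norm

theorem hasFPowerSeriesAt_ofScalarsSum_of_eventually_hasSum [CompleteSpace 𝕜]
    {a : ℕ → 𝕜} {F : 𝕜 → 𝕜}
    (h : ∀ᶠ t in 𝓝[≠] 0, HasSum (fun n => a n * t ^ n) (F t)) :
    HasFPowerSeriesAt (ofScalarsSum a) (ofScalars 𝕜 a) 0 ∧ F =ᶠ[𝓝[≠] 0] ofScalarsSum a := by
  obtain ⟨t, hsum, ht0⟩ := (h.and eventually_mem_nhdsWithin).exists
  have hrad : 0 < (ofScalars 𝕜 a).radius :=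
    lt_of_lt_of_le (by simpa using ht0) (le_ofScalars_radius_of_summable hsum.summable)
  have hp : HasFPowerSeriesAt (ofScalarsSum a) (ofScalars 𝕜 a) 0 :=
    ((ofScalars 𝕜 a).hasFPowerSeriesOnBall hrad).hasFPowerSeriesAt
  refine ⟨hp, ?_⟩
  filter_upwards [h, nhdsWithin_le_nhds hp.eventually_hasSum] with t hF hS
  simp only [ofScalars_apply_eq, smul_eq_mul, zero_add] at hS
  exact hF.unique hS

theorem HasFPowerSeriesAt.iteratedDeriv_ofScalars_zero [CompleteSpace 𝕜] [CharZero 𝕜]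
    {f : 𝕜 → 𝕜} {a : ℕ → 𝕜} (hf : HasFPowerSeriesAt f (ofScalars 𝕜 a) 0) (n : ℕ) :
    iteratedDeriv n f 0 = n ! * a n := by
  have h := congrFun (ofScalars_series_injective 𝕜 𝕜
    (hf.analyticAt.hasFPowerSeriesAt.eq_formalMultilinearSeries hf)) n
  rw [← h, mul_div_cancel₀ _ (by exact_mod_cast n.factorial_ne_zero)]

end

theorem Real.iteratedDeriv_one_add_rpow_zero (x : ℝ) (m : ℕ) :
    iteratedDeriv m (fun t : ℝ => (1 + t) ^ x) 0 = ∏ i ∈ Finset.range m, (x - i) := by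
  rw [Real.one_add_rpow_hasFPowerSeriesAt_zero.iteratedDeriv_ofScalars_zero, Ring.choose_eq_smul,
    smul_eq_mul, mul_inv_cancel_left₀ (by exact_mod_cast m.factorial_ne_zero),
    ← Polynomial.aeval_eq_smeval, ← descPochhammer_eval_eq_prod_range,
    ← descPochhammer_map (algebraMap ℤ ℝ), Polynomial.eval_map_algebraMap]

theorem type2_degenerate_bernoulli_second_kind_binomial_expansion_general
    (lam : ℝ)
    (bstar : ℕ → ℝ → ℝ)
    (hbstar : ∀ x : ℝ, ∀ᶠ t : ℝ in 𝓝[≠] 0, HasSum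
      (fun n : ℕ => bstar n x * t ^ n / (n.factorial : ℝ))
      (((1 + t) - (1 + t)⁻¹) / (((1 + t) ^ lam - 1) / lam) * (1 + t) ^ x))
    (x : ℝ) (n : ℕ) :
    bstar n x =
      ∑ l ∈ Finset.range (n + 1), (n.choose l : ℝ) * bstar l 0 *
        ∏ i ∈ Finset.range (n - l), (x - i) := by
  have hseries (y : ℝ) : ∀ᶠ t : ℝ in 𝓝[≠] 0, HasSum (fun m => bstar m y / m ! * t ^ m)
      (((1 + t) - (1 + t)⁻¹) / (((1 + t) ^ lam - 1) / lam) * (1 + t) ^ y) :=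
    (hbstar y).mono fun t ht => by simpa only [div_mul_eq_mul_div] using ht
  obtain ⟨hSx, hGx⟩ := hasFPowerSeriesAt_ofScalarsSum_of_eventually_hasSum (hseries x)
  obtain ⟨hS0, hG0⟩ := hasFPowerSeriesAt_ofScalarsSum_of_eventually_hasSum (hseries 0)
  have hbinom := (Real.one_add_rpow_hasFPowerSeriesAt_zero (a := x)).analyticAt
  set Sx : ℝ → ℝ := ofScalarsSum fun m => bstar m x / (m ! : ℝ)
  set S0 : ℝ → ℝ := ofScalarsSum fun m => bstar m 0 / (m ! : ℝ)
  have hprod : Sx =ᶠ[𝓝 0] fun t => S0 t * (1 + t) ^ x := by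
    refine (hSx.continuousAt.eventuallyEq_nhds_iff_eventuallyEq_nhdsNE
      (hS0.continuousAt.mul hbinom.continuousAt)).mp ?_
    filter_upwards [hGx, hG0] with t hx h0
    rw [Pi.mul_apply, ← hx, ← h0, rpow_zero, mul_one]
  calc bstar n x = iteratedDeriv n Sx 0 := by
        rw [hSx.iteratedDeriv_ofScalars_zero, mul_div_cancel₀ _ (by positivity)]
    _ = iteratedDeriv n (fun t => S0 t * (1 + t) ^ x) 0 := hprod.iteratedDeriv_eq n
    _ = _ := by
        rw [iteratedDeriv_fun_mul hS0.analyticAt.contDiffAt hbinom.contDiffAt]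
        refine Finset.sum_congr rfl fun l _ => ?_
        rw [hS0.iteratedDeriv_ofScalars_zero, Real.iteratedDeriv_one_add_rpow_zero,
          mul_div_cancel₀ _ (by positivity)]

/-- For nonzero real `lam`, real `x` and `n ≥ 0`:
`b*_{n,λ}(x) = Σ_{l=0}^n C(n,l) b*_{l,λ} (x)_{n-l}`, where the type 2 degenerate
Bernoulli polynomials of the second kind `b*` have EGF
`((1+t)-(1+t)⁻¹)/log_λ(1+t) · (1+t)^x` with `log_λ(1+t) = ((1+t)^λ-1)/λ`,
`b*_{l,λ} = b*_{l,λ}(0)`, and `(x)_m = x(x-1)⋯(x-m+1)` is the falling factorial. -/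
theorem type2_degenerate_bernoulli_second_kind_binomial_expansion
    (lam : ℝ) (hlam : lam ≠ 0)
    (bstar : ℕ → ℝ → ℝ)
    (hbstar : ∀ x : ℝ, ∀ᶠ t : ℝ in 𝓝[≠] 0, HasSum
      (fun n : ℕ => bstar n x * t ^ n / (n.factorial : ℝ))
      (((1 + t) - (1 + t)⁻¹) / (((1 + t) ^ lam - 1) / lam) * (1 + t) ^ x))
    (x : ℝ) (n : ℕ) :
    bstar n x =
      ∑ l ∈ Finset.range (n + 1), (n.choose l : ℝ) * bstar l 0 *
        ∏ i ∈ Finset.range (n - l), (x - i) :=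
  type2_degenerate_bernoulli_second_kind_binomial_expansion_general lam bstar hbstar x n
end
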